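/- If R and R' are two potentially applicable sets of ground rules, then their union R ∪ R' is potentially applicable. -/
import Mathlib


open scoped Classical

namespace ASP

universe u v

/-- A ground literal: an atom together with a sign
(`true` for the atom itself, `false` for its strong negation `¬a`).
The atom `|l|` of a literal `l` is its first component `l.1`. -/
abbrev Lit (α : Type u) : Type u := α × Bool

/-- A ground disjunctive rule, consisting of three finite sets of literals:
head, positive body and negative body. -/
structure Rule (α : Type u) : Type u where
  head : Finset (Lit α)
  pbody : Finset (Lit α)
  nbody : Finset (Lit α)
deriving DecidableEq

variable {α : Type u}

/-- A set of literals is consistent if it contains no atom together with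
its strong negation. -/
def Consistent (S : Set (Lit α)) : Prop :=
  ∀ a : α, ¬((a, true) ∈ S ∧ (a, false) ∈ S)

/-- `S` satisfies a rule `r`: the head intersects `S` whenever
`pbody(r) ⊆ S` and `nbody(r) ∩ S = ∅`. -/
def SatRule (S : Set (Lit α)) (r : Rule α) : Prop :=
  ((∀ l ∈ r.pbody, l ∈ S) ∧ (∀ l ∈ r.nbody, l ∉ S)) → ∃ l ∈ r.head, l ∈ S

/-- Answer sets of a positive program: `⊆`-minimal consistent sets of
literals satisfying all rules. -/
def IsAnswerSetPos (P : Set (Rule α)) (S : Set (Lit α)) : Prop :=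
  Consistent S ∧ (∀ r ∈ P, SatRule S r) ∧
    ∀ T : Set (Lit α), Consistent T → (∀ r ∈ P, SatRule T r) → T ⊆ S → T = S

/-- The reduct `Π^S` of a program w.r.t. a set of literals `S`. -/
def reduct (P : Set (Rule α)) (S : Set (Lit α)) : Set (Rule α) :=
  {x | ∃ r ∈ P, (∀ l ∈ r.nbody, l ∉ S) ∧ x = ⟨r.head, r.pbody, ∅⟩}

/-- `S` is an answer set of `P` iff `S` is an answer set of the positive
program `P^S`. -/
def IsAnswerSet (P : Set (Rule α)) (S : Set (Lit α)) : Prop :=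
  IsAnswerSetPos (reduct P S) S

/-- `Lit(Π)`: the literals occurring in a program. -/
def litsOf (P : Set (Rule α)) : Set (Lit α) :=
  {l | ∃ r ∈ P, l ∈ r.head ∨ l ∈ r.pbody ∨ l ∈ r.nbody}

/-- Edges of the positive dependency graph: from each head literal of a
rule to each of its positive body literals. -/
def DepEdge (P : Set (Rule α)) (l l' : Lit α) : Prop :=
  ∃ r ∈ P, l ∈ r.head ∧ l' ∈ r.pbody

/-- Head-cycle freeness: no two distinct literals occurring together in
some rule head lie on a common cycle of the positive dependency graph. -/
def HeadCycleFree (P : Set (Rule α)) : Prop :=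
  ∀ r ∈ P, ∀ l ∈ r.head, ∀ l' ∈ r.head, l ≠ l' →
    ¬(Relation.ReflTransGen (DepEdge P) l l' ∧ Relation.ReflTransGen (DepEdge P) l' l)

/-- `P ∪ S`: the program `P` extended with the literals of `S` as facts. -/
def withFacts (P : Set (Rule α)) (S : Set (Lit α)) : Set (Rule α) :=
  P ∪ {x | ∃ l ∈ S, x = ⟨{l}, ∅, ∅⟩}

/-- A set `R` of ground rules is potentially applicable if it admits an
enumeration `⟨r_i⟩_{i ∈ I}` (without repetitions), where `I` is a prefix of
`ℕ` or `I = ℕ`, such that `pbody(r_i) ⊆ ⋃_{j<i} head(r_j)` for all `i ∈ I`. -/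
def PotentiallyApplicable (R : Set (Rule α)) : Prop :=
  ∃ (I : Set ℕ) (e : ℕ → Rule α),
    (∀ i ∈ I, ∀ j, j ≤ i → j ∈ I) ∧
    (∀ i ∈ I, e i ∈ R) ∧
    (∀ r ∈ R, ∃ i ∈ I, e i = r) ∧
    (∀ i ∈ I, ∀ j ∈ I, e i = e j → i = j) ∧
    (∀ i ∈ I, ∀ l ∈ (e i).pbody, ∃ j ∈ I, j < i ∧ l ∈ (e j).head)

lemma pa_of_partial_enum {α : Type u} (R : Set (Rule α)) (D : ℕ → Prop) (s : ℕ → Rule α)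
    (hmem : ∀ n, D n → s n ∈ R)
    (hsurj : ∀ r ∈ R, ∃ n, D n ∧ s n = r)
    (hp : ∀ n, D n → ∀ l ∈ (s n).pbody, ∃ m, D m ∧ m < n ∧ l ∈ (s m).head) :
    PotentiallyApplicable R := by
  set kept : ℕ → Prop := fun n => D n ∧ ∀ m < n, D m → s m ≠ s n with hkept
  -- first occurrence of a rule is kept
  have hfirst : ∀ n0, D n0 → ∃ n', kept n' ∧ s n' = s n0 ∧ n' ≤ n0 := by
    intro n0 hD
    have hne : {m | D m ∧ s m = s n0}.Nonempty := ⟨n0, hD, rfl⟩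
    set n' := sInf {m | D m ∧ s m = s n0} with hn'
    have hmemS : D n' ∧ s n' = s n0 := Nat.sInf_mem hne
    refine ⟨n', ⟨hmemS.1, fun m hm hDm heq => ?_⟩, hmemS.2, Nat.sInf_le ⟨hD, rfl⟩⟩
    exact absurd (Nat.sInf_le (⟨hDm, heq.trans hmemS.2⟩ : m ∈ {m | D m ∧ s m = s n0}))
      (not_le.2 hm)
  refine ⟨{k | ∃ n, kept n ∧ Nat.count kept n = k}, fun k => s (Nat.nth kept k),
    ?_, ?_, ?_, ?_, ?_⟩
  · -- prefix closed
    rintro k ⟨n, hn, hc⟩ j hj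
    have hcard : ∀ hf : (setOf kept).Finite, j < hf.toFinset.card := fun hf =>
      lt_of_le_of_lt (hc ▸ hj) (Nat.count_lt_card hf hn)
    exact ⟨Nat.nth kept j, Nat.nth_mem j hcard, Nat.count_nth hcard⟩
  · rintro k ⟨n, hn, hc⟩
    have hnth : Nat.nth kept k = n := by rw [← hc]; exact Nat.nth_count hn
    show s (Nat.nth kept k) ∈ R
    rw [hnth]; exact hmem n hn.1
  · intro r hr
    obtain ⟨n0, hD, hs⟩ := hsurj r hr
    obtain ⟨n', hk, hs', _⟩ := hfirst n0 hD
    refine ⟨Nat.count kept n', ⟨n', hk, rfl⟩, ?_⟩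
    show s (Nat.nth kept (Nat.count kept n')) = r
    rw [Nat.nth_count hk, hs', hs]
  · rintro k ⟨n, hn, hc⟩ k' ⟨n', hn', hc'⟩ heq
    have h1 : Nat.nth kept k = n := by rw [← hc]; exact Nat.nth_count hn
    have h2 : Nat.nth kept k' = n' := by rw [← hc']; exact Nat.nth_count hn'
    have heq : s n = s n' := by simpa [h1, h2] using heq
    have : n = n' := by
      rcases lt_trichotomy n n' with h | h | h
      · exact absurd heq (hn'.2 n h hn.1)
      · exact h
      · exact absurd heq.symm (hn.2 n' h hn'.1)
    rw [← hc, ← hc', this]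
  · rintro k ⟨n, hn, hc⟩ l hl
    have h1 : Nat.nth kept k = n := by rw [← hc]; exact Nat.nth_count hn
    rw [show (fun k => s (Nat.nth kept k)) k = s n by simp [h1]] at hl
    obtain ⟨m, hDm, hmn, hlh⟩ := hp n hn.1 l hl
    obtain ⟨n', hk', hs', hle⟩ := hfirst m hDm
    refine ⟨Nat.count kept n', ⟨n', hk', rfl⟩, ?_, ?_⟩
    · rw [← hc]; exact Nat.count_strict_mono hk' (lt_of_le_of_lt hle hmn)
    · show l ∈ (s (Nat.nth kept (Nat.count kept n'))).head
      rw [Nat.nth_count hk', hs']; exact hlh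

/-- The union of two potentially applicable sets of ground rules is
potentially applicable. -/
theorem statement7 {α : Type u} (R R' : Set (Rule α))
    (h : PotentiallyApplicable R) (h' : PotentiallyApplicable R') :
    PotentiallyApplicable (R ∪ R') := by
  obtain ⟨I, e, _, hImem, hIsurj, _, hIp⟩ := h
  obtain ⟨J, f, _, hJmem, hJsurj, _, hJp⟩ := h'
  refine pa_of_partial_enum (R ∪ R')
    (fun n => (n % 2 = 0 ∧ n / 2 ∈ I) ∨ (n % 2 = 1 ∧ n / 2 ∈ J))
    (fun n => if n % 2 = 0 then e (n / 2) else f (n / 2)) ?_ ?_ ?_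
  · rintro n (⟨hpar, hi⟩ | ⟨hpar, hj⟩)
    · simp only [hpar, if_pos]; exact Or.inl (hImem _ hi)
    · simp only [hpar]; norm_num; exact Or.inr (hJmem _ hj)
  · rintro r (hr | hr)
    · obtain ⟨i, hi, hie⟩ := hIsurj r hr
      exact ⟨2 * i, Or.inl ⟨by omega, by simpa using hi⟩, by simpa using hie⟩
    · obtain ⟨j, hj, hjf⟩ := hJsurj r hr
      refine ⟨2 * j + 1, Or.inr ⟨by omega, ?_⟩, ?_⟩
      · have : (2 * j + 1) / 2 = j := by omega
        rw [this]; exact hj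
      · have h2 : (2 * j + 1) % 2 = 1 := by omega
        have h3 : (2 * j + 1) / 2 = j := by omega
        simp [h2, h3, hjf]
  · rintro n (⟨hpar, hi⟩ | ⟨hpar, hj⟩) l hl
    · have hl : l ∈ (e (n / 2)).pbody := by simpa [hpar] using hl
      obtain ⟨j, hj, hji, hlh⟩ := hIp _ hi l hl
      refine ⟨2 * j, Or.inl ⟨by omega, by simpa using hj⟩, by omega, ?_⟩
      have : (2 * j) % 2 = 0 := by omega
      have h2 : (2 * j) / 2 = j := by omega
      simpa [this, h2] using hlh
    · have hl : l ∈ (f (n / 2)).pbody := by simpa [hpar] using hl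
      obtain ⟨j, hj, hji, hlh⟩ := hJp _ hj l hl
      refine ⟨2 * j + 1, Or.inr ⟨by omega, ?_⟩, by omega, ?_⟩
      · have : (2 * j + 1) / 2 = j := by omega
        rw [this]; exact hj
      · have h2 : (2 * j + 1) % 2 = 1 := by omega
        have h3 : (2 * j + 1) / 2 = j := by omega
        simp [h2, h3, hlh]

end ASP
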